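/- arXiv:1109.1200 — 2 statements merged into one kernel-verified Lean document; each statement's English description precedes it below -/
import Mathlib

section
/- Let G be a group, G' a subgroup of G, and W a symmetric countably syndetic subset of G. Then G' ∩ W² is countably syndetic in G', i.e., countably many left translates of G' ∩ W² by elements of G' cover G'. -/
open Pointwise

/-- If `G` is a group, `G'` a subgroup of `G`, and `W` a symmetric countably syndetic subset
of `G`, then `G' ∩ W²` is countably syndetic in `G'`: countably many left translates of
`G' ∩ W²` by elements of `G'` cover `G'`. -/
theorem subgroup_inter_sq_countably_syndetic
    {G : Type*} [Group G] (G' : Subgroup G) (W : Set G) (hsym : W⁻¹ = W)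
    (hsynd : ∃ s : ℕ → G, ∀ g : G, ∃ n : ℕ, g ∈ s n • W) :
    ∃ t : ℕ → G, (∀ n, t n ∈ G') ∧
      ∀ g ∈ G', ∃ n : ℕ, g ∈ t n • ((G' : Set G) ∩ W ^ 2) := by
  obtain ⟨s, hs⟩ := hsynd
  classical
  -- choose t n ∈ G' ∩ s n • W when possible, else 1
  set t : ℕ → G := fun n =>
    if h : ∃ x, x ∈ (G' : Set G) ∩ s n • W then h.choose else 1 with ht
  refine ⟨t, ?_, ?_⟩
  · intro n
    by_cases h : ∃ x, x ∈ (G' : Set G) ∩ s n • W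
    · simp only [ht, dif_pos h]
      exact h.choose_spec.1
    · rw [ht]; simp only []; rw [dif_neg h]; exact G'.one_mem
  · intro g hg
    obtain ⟨n, hn⟩ := hs g
    have h : ∃ x, x ∈ (G' : Set G) ∩ s n • W := ⟨g, hg, hn⟩
    have htn : t n ∈ (G' : Set G) ∩ s n • W := by
      simp only [ht, dif_pos h]; exact h.choose_spec
    refine ⟨n, ?_⟩
    rw [Set.mem_smul_set_iff_inv_smul_mem]
    constructor
    · exact G'.mul_mem (G'.inv_mem htn.1) hg
    · -- (t n)⁻¹ * g ∈ W ^ 2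
      obtain ⟨w1, hw1, he1⟩ := htn.2
      obtain ⟨w2, hw2, he2⟩ := hn
      rw [sq]
      have hw1' : w1⁻¹ ∈ W := by rw [← hsym]; exact Set.inv_mem_inv.mpr hw1
      refine ⟨w1⁻¹, hw1', w2, hw2, ?_⟩
      simp only [smul_eq_mul] at he1 he2 ⊢
      rw [← he1, ← he2]
      group
end

section
/- Let H be an infinite-dimensional separable complex Hilbert space, let W be a symmetric countably syndetic subset of U(H), and suppose H decomposes as an orthogonal direct sum H = ⊕ₙ Kₙ of infinite-dimensional closed subspaces Kₙ. Then there exists n such that W² is full for Kₙ, i.e., for every unitary operator u on Kₙ there exists v ∈ W² leaving Kₙ invariant with v|_{Kₙ} = u. -/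
/-!
Realise `H` as the Hilbert sum `ℓ²(Kₙ)`. If the theorem failed, pick for every `n` a unitary
`uₙ` of `Kₙ` that no element of `W ^ 2` extends, and for every `A ⊆ ℕ` let `D A` be the
block-diagonal unitary acting as `uₙ` on `Kₙ` for `n ∈ A` and as the identity elsewhere. There are
uncountably many `A` but only countably many translates `sᵢ • W`, so two sets `A ≠ B` have `D A`,
`D B` in the same translate; as `W` is symmetric, `(D A)⁻¹ * D B ∈ W ^ 2`. For `n ∈ B \ A` this
element extends `uₙ`, a contradiction.
-/

open Pointwise

section Syndetic

variable {G ι : Type*} [Group G] {W : Set G}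

theorem inv_mul_mem_sq_of_mem_smul (hsym : W⁻¹ = W) {t g h : G} (hg : g ∈ t • W)
    (hh : h ∈ t • W) : g⁻¹ * h ∈ W ^ 2 := by
  obtain ⟨a, ha, rfl⟩ := hg
  obtain ⟨b, hb, rfl⟩ := hh
  have ha' : a⁻¹ ∈ W := hsym ▸ Set.inv_mem_inv.2 ha
  simpa [sq, mul_assoc] using Set.mul_mem_mul ha' hb

theorem exists_not_subset_inv_mul_mem_sq (hsym : W⁻¹ = W) (s : ι → G)
    (hs : ∀ g, ∃ i, g ∈ s i • W) (f : Set ι → G) :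
    ∃ A B : Set ι, ¬ B ⊆ A ∧ (f A)⁻¹ * f B ∈ W ^ 2 := by
  choose k hk using fun A => hs (f A)
  obtain ⟨A, B, hkAB, hAB⟩ : ∃ A B, k A = k B ∧ A ≠ B := by
    simpa [Function.Injective, and_comm] using Function.cantor_injective k
  have hmem := inv_mul_mem_sq_of_mem_smul hsym (hk A) (hkAB ▸ hk B)
  by_cases hBA : B ⊆ A
  · refine ⟨B, A, fun hAB' => hAB (hAB'.antisymm hBA), ?_⟩
    have hsymSq : (W ^ 2)⁻¹ = W ^ 2 := by rw [← inv_pow, hsym]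
    simpa [hsymSq] using Set.inv_mem_inv.2 hmem
  · exact ⟨A, B, hBA, hmem⟩

end Syndetic

section BlockDiagonal

variable {𝕜 ι : Type*} {G : ι → Type*} [NormedField 𝕜] [∀ i, NormedAddCommGroup (G i)]
  [∀ i, NormedSpace 𝕜 (G i)] {p : ENNReal} [Fact (1 ≤ p)]

noncomputable def lp.congrRight (w : ∀ i, G i ≃ₗᵢ[𝕜] G i) : lp G p ≃ₗᵢ[𝕜] lp G p where
  toFun f := ⟨fun i => w i (f i), (lp.memℓp f).mono' fun i => by simp⟩
  invFun f := ⟨fun i => (w i).symm (f i), (lp.memℓp f).mono' fun i => by simp⟩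
  left_inv f := by ext i; simp
  right_inv f := by ext i; simp
  map_add' f g := by ext i; exact map_add (w i) (f i) (g i)
  map_smul' c f := by ext i; simp
  norm_map' f := by
    have hp : p ≠ 0 := (zero_lt_one.trans_le Fact.out).ne'
    exact le_antisymm (lp.norm_mono hp fun i => by simp) (lp.norm_mono hp fun i => by simp)

theorem lp.congrRight_single [DecidableEq ι] (w : ∀ i, G i ≃ₗᵢ[𝕜] G i) (i : ι) (x : G i) :
    lp.congrRight w (lp.single p i x) = lp.single p i (w i x) := by
  ext j
  change w j (lp.single p i x j) = _
  rcases eq_or_ne j i with rfl | hj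
  · simp
  · simp [hj]

end BlockDiagonal

namespace IsHilbertSum

variable {𝕜 ι E : Type*} {G : ι → Type*} [RCLike 𝕜] [NormedAddCommGroup E]
  [InnerProductSpace 𝕜 E] [CompleteSpace E] [∀ i, NormedAddCommGroup (G i)]
  [∀ i, InnerProductSpace 𝕜 (G i)] {V : ∀ i, G i →ₗᵢ[𝕜] E}

noncomputable def diagonal (hV : IsHilbertSum 𝕜 G V) (w : ∀ i, G i ≃ₗᵢ[𝕜] G i) : E ≃ₗᵢ[𝕜] E :=
  (hV.linearIsometryEquiv.trans (lp.congrRight w)).trans hV.linearIsometryEquiv.symm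

theorem diagonal_apply (hV : IsHilbertSum 𝕜 G V) (w : ∀ i, G i ≃ₗᵢ[𝕜] G i) {i : ι} (x : G i) :
    hV.diagonal w (V i x) = V i (w i x) := by
  classical
  have hx : hV.linearIsometryEquiv (V i x) = lp.single 2 i x := by
    rw [← hV.linearIsometryEquiv_symm_apply_single, LinearIsometryEquiv.apply_symm_apply]
  simp [diagonal, hx, lp.congrRight_single]

theorem inv_diagonal_mul_diagonal_apply (hV : IsHilbertSum 𝕜 G V) (w w' : ∀ i, G i ≃ₗᵢ[𝕜] G i)
    {i : ι} (x : G i) :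
    ((hV.diagonal w)⁻¹ * hV.diagonal w') (V i x) = V i ((w i).symm (w' i x)) := by
  rw [LinearIsometryEquiv.coe_mul, Function.comp_apply, diagonal_apply,
    LinearIsometryEquiv.coe_inv, LinearIsometryEquiv.symm_apply_eq, diagonal_apply,
    LinearIsometryEquiv.apply_symm_apply]

end IsHilbertSum

theorem Submodule.map_eq_self_of_forall_apply_eq {R M : Type*} [Semiring R] [AddCommMonoid M]
    [Module R M] (K : Submodule R M) (f : M →ₗ[R] M) {u : K → K} (hu : Function.Surjective u)
    (h : ∀ x : K, f x = u x) : K.map f = K := by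
  ext y
  constructor
  · rintro ⟨x, hx, rfl⟩
    exact h ⟨x, hx⟩ ▸ (u ⟨x, hx⟩).2
  · intro hy
    obtain ⟨x, hx⟩ := hu ⟨y, hy⟩
    exact ⟨x, x.2, by rw [h, hx]⟩

theorem exists_full_subspace_general
    {H : Type*} [NormedAddCommGroup H] [InnerProductSpace ℂ H] [CompleteSpace H]
    (W : Set (H ≃ₗᵢ[ℂ] H)) (hsym : W⁻¹ = W)
    (hsynd : ∃ s : ℕ → (H ≃ₗᵢ[ℂ] H), ∀ g : (H ≃ₗᵢ[ℂ] H), ∃ n : ℕ, g ∈ s n • W)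
    (K : ℕ → Submodule ℂ H)
    (hclosed : ∀ n, IsClosed ((K n) : Set H))
    (horth : ∀ m n, m ≠ n → ∀ x ∈ K m, ∀ y ∈ K n, (inner ℂ x y : ℂ) = 0)
    (hdense : (⨆ n, K n).topologicalClosure = ⊤) :
    ∃ n : ℕ, ∀ u : (K n) ≃ₗᵢ[ℂ] (K n), ∃ v ∈ W ^ 2,
      (K n).map (v.toLinearEquiv : H →ₗ[ℂ] H) = K n ∧
      ∀ x : K n, v (x : H) = (u x : H) := by
  classical
  by_contra! hcon
  choose u hu using hcon
  have : ∀ n, CompleteSpace (K n) := fun n => (hclosed n).completeSpace_coe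
  have hsum : IsHilbertSum ℂ (fun n => K n) fun n => (K n).subtypeₗᵢ :=
    .mkInternal _ (fun m n hmn x y => horth m n hmn x x.2 y y.2) hdense.ge
  obtain ⟨s, hs⟩ := hsynd
  let D (A : Set ℕ) : H ≃ₗᵢ[ℂ] H :=
    hsum.diagonal fun n => if n ∈ A then u n else LinearIsometryEquiv.refl ℂ (K n)
  obtain ⟨A, B, hBA, hW⟩ := exists_not_subset_inv_mul_mem_sq hsym s hs D
  obtain ⟨n, hnB, hnA⟩ := Set.not_subset.1 hBA
  have hv : ∀ x : K n, ((D A)⁻¹ * D B) x = u n x := fun x =>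
    (hsum.inv_diagonal_mul_diagonal_apply _ _ x).trans (by simp [hnA, hnB]; rfl)
  obtain ⟨x, hx⟩ := hu n _ hW
    ((K n).map_eq_self_of_forall_apply_eq _ (u n).surjective hv)
  exact hx (hv x)

/-- Let `H` be an infinite-dimensional separable complex Hilbert space, `W` a symmetric
countably syndetic subset of `U(H)`, and `H = ⊕ₙ Kₙ` an orthogonal decomposition of `H`
into infinite-dimensional closed subspaces. Then there is an `n` such that `W ^ 2` is full
for `Kₙ`: every unitary of `Kₙ` is the restriction to `Kₙ` of some element of `W ^ 2`
leaving `Kₙ` invariant. -/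
theorem exists_full_subspace
    {H : Type*} [NormedAddCommGroup H] [InnerProductSpace ℂ H] [CompleteSpace H]
    [TopologicalSpace.SeparableSpace H] (hinf : ¬ FiniteDimensional ℂ H)
    (W : Set (H ≃ₗᵢ[ℂ] H)) (hsym : W⁻¹ = W)
    (hsynd : ∃ s : ℕ → (H ≃ₗᵢ[ℂ] H), ∀ g : (H ≃ₗᵢ[ℂ] H), ∃ n : ℕ, g ∈ s n • W)
    (K : ℕ → Submodule ℂ H)
    (hclosed : ∀ n, IsClosed ((K n) : Set H))
    (hKinf : ∀ n, ¬ FiniteDimensional ℂ (K n))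
    (horth : ∀ m n, m ≠ n → ∀ x ∈ K m, ∀ y ∈ K n, (inner ℂ x y : ℂ) = 0)
    (hdense : (⨆ n, K n).topologicalClosure = ⊤) :
    ∃ n : ℕ, ∀ u : (K n) ≃ₗᵢ[ℂ] (K n), ∃ v ∈ W ^ 2,
      (K n).map (v.toLinearEquiv : H →ₗ[ℂ] H) = K n ∧
      ∀ x : K n, v (x : H) = (u x : H) :=
  exists_full_subspace_general W hsym hsynd K hclosed horth hdense
end
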